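/- Fix λ > 0 and β > 0 and set x_{1,2} = (1/(λ²β))·[(1+β)λ + 2 ∓ 2√(λ²β + λ(β+1) + 1)]. Then the quadratic expression Q(x) = −(β−1)² + 2β[(1+β)λ + 2]x − β²λ²x² is nonnegative exactly for x ∈ [x₁, x₂], and the density p(x) = (1/(2π))·√(Q(x))/(x(x+1)) on [x₁, x₂] plus an atom of mass max(1−β,0) at 0 integrates to 1. -/

import Mathlib

/-!
Completing the square, `Q x = (βλ)² (x - x₁)(x₂ - x)`, which settles the sign of `Q` and shows
`x₁ x₂ = ((β - 1)/(λβ))²` and `(x₁ + 1)(x₂ + 1) = (1 + (β + 1)/(λβ))²`, with `0 ≤ x₁`.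
Splitting `1/(x(x+1)) = 1/x - 1/(x+1)` reduces the density to two Stieltjes transforms of a
semicircle, `∫ₐᵇ √((x - a)(b - x)) / (x - p) dx = π((a + b)/2 - p - √((a - p)(b - p)))` for `p ≤ a`,
obtained from an explicit `arcsin` primitive; their difference gives the continuous mass
`(β + 1 - |β - 1|)/2 = min β 1`, complementary to the atom `max (1 - β) 0`.
-/
open Real MeasureTheory Set intervalIntegral

/-- A primitive of `t ↦ √(1 - t²) / (t + c)` on `[-1, 1]` for `c ≥ 1`. At `c = 1, t = -1` the
last `arcsin` has the junk argument `0 / 0`, harmlessly, since its coefficient `√(c² - 1)` is then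
`0`. -/
noncomputable def semicirclePrimitive (c t : ℝ) : ℝ :=
  √(1 - t ^ 2) + c * arcsin t - √(c ^ 2 - 1) * arcsin ((1 + c * t) / (c + t))

section SemicirclePrimitive

variable {c t : ℝ}

lemma hasDerivAt_sqrt_one_sub_sq (ht : t ∈ Ioo (-1 : ℝ) 1) :
    HasDerivAt (fun t => √(1 - t ^ 2)) (-t / √(1 - t ^ 2)) t := by
  have hpos : 0 < 1 - t ^ 2 := by nlinarith [ht.1, ht.2]
  refine ((((hasDerivAt_id t).pow 2).const_sub 1).sqrt hpos.ne').congr_deriv ?_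
  simp only [id, Pi.pow_apply]
  field_simp
  ring

lemma hasDerivAt_sqrt_mul_arcsin_moebius (hc : 1 ≤ c) (ht : t ∈ Ioo (-1 : ℝ) 1) :
    HasDerivAt (fun t => √(c ^ 2 - 1) * arcsin ((1 + c * t) / (c + t)))
      ((c ^ 2 - 1) / ((t + c) * √(1 - t ^ 2))) t := by
  rcases hc.eq_or_lt with rfl | hc
  · simpa using hasDerivAt_const t (0 : ℝ)
  have hct : 0 < c + t := by linarith [ht.1]
  have hpos : 0 < 1 - t ^ 2 := by nlinarith [ht.1, ht.2]
  have hc2 : 0 < c ^ 2 - 1 := by nlinarith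
  have hv : HasDerivAt (fun t => (1 + c * t) / (c + t)) ((c ^ 2 - 1) / (c + t) ^ 2) t := by
    refine ((((hasDerivAt_id t).const_mul c).const_add 1).div
      ((hasDerivAt_id t).const_add c) hct.ne').congr_deriv ?_
    simp only [id]
    ring
  have hv_sq : 1 - ((1 + c * t) / (c + t)) ^ 2 = (√(c ^ 2 - 1) * √(1 - t ^ 2) / (c + t)) ^ 2 := by
    rw [div_pow, div_pow, mul_pow, sq_sqrt hc2.le, sq_sqrt hpos.le]
    field_simp
    ring
  have hv_pos : 0 < 1 - ((1 + c * t) / (c + t)) ^ 2 := by rw [hv_sq]; positivity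
  have hv_ne : (1 + c * t) / (c + t) ≠ -1 ∧ (1 + c * t) / (c + t) ≠ 1 := by
    constructor <;> intro h <;> rw [h] at hv_pos <;> norm_num at hv_pos
  refine (((hasDerivAt_arcsin hv_ne.1 hv_ne.2).comp t hv).const_mul √(c ^ 2 - 1)).congr_deriv ?_
  rw [hv_sq, sqrt_sq (by positivity)]
  have : 0 < √(c ^ 2 - 1) := sqrt_pos.2 hc2
  have : 0 < √(1 - t ^ 2) := sqrt_pos.2 hpos
  rw [add_comm t c]
  field_simp

lemma hasDerivAt_semicirclePrimitive (hc : 1 ≤ c) (ht : t ∈ Ioo (-1 : ℝ) 1) :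
    HasDerivAt (semicirclePrimitive c) (√(1 - t ^ 2) / (t + c)) t := by
  have hpos : 0 < 1 - t ^ 2 := by nlinarith [ht.1, ht.2]
  have hct : 0 < t + c := by linarith [ht.1]
  have harcsin := hasDerivAt_arcsin (by linarith [ht.1]) (by linarith [ht.2])
  refine (((hasDerivAt_sqrt_one_sub_sq ht).add (harcsin.const_mul c)).sub
    (hasDerivAt_sqrt_mul_arcsin_moebius hc ht)).congr_deriv ?_
  have hsq : √(1 - t ^ 2) ^ 2 = 1 - t ^ 2 := sq_sqrt hpos.le
  have : 0 < √(1 - t ^ 2) := sqrt_pos.2 hpos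
  field_simp
  linear_combination -hsq

lemma continuousOn_semicirclePrimitive (hc : 1 ≤ c) :
    ContinuousOn (semicirclePrimitive c) (Icc (-1) 1) := by
  refine (by fun_prop : Continuous fun t => √(1 - t ^ 2) + c * arcsin t).continuousOn.sub ?_
  rcases hc.eq_or_lt with rfl | hc
  · simpa using continuousOn_const
  refine continuousOn_const.mul (continuous_arcsin.comp_continuousOn ?_)
  exact (continuousOn_const.add (continuousOn_const.mul continuousOn_id)).div
    (continuousOn_const.add continuousOn_id) fun t ht => by linarith [ht.1]

lemma semicirclePrimitive_one_sub_neg_one (hc : 1 ≤ c) :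
    semicirclePrimitive c 1 - semicirclePrimitive c (-1) = π * (c - √(c ^ 2 - 1)) := by
  rcases hc.eq_or_lt with rfl | hc
  · simp [semicirclePrimitive]
  have h₁ : (1 + c * 1) / (c + 1) = 1 := by field_simp; ring
  have h₂ : (1 + c * -1) / (c + -1) = -1 := by
    rw [div_eq_iff (by linarith)]; ring
  simp only [semicirclePrimitive, h₁, h₂, arcsin_one, arcsin_neg]
  norm_num
  ring

end SemicirclePrimitive

noncomputable def semicirclePrimitiveOn (a b p x : ℝ) : ℝ :=
  (b - a) / 2 * semicirclePrimitive ((a + b - 2 * p) / (b - a)) ((2 * x - (a + b)) / (b - a))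

section SemicirclePrimitiveOn

variable {a b p x : ℝ}

lemma one_le_rescaled_pole (hab : a < b) (hpa : p ≤ a) : 1 ≤ (a + b - 2 * p) / (b - a) := by
  rw [le_div_iff₀ (by linarith)]; linarith

lemma rescaled_mem_Icc (hab : a < b) (hx : x ∈ Icc a b) :
    (2 * x - (a + b)) / (b - a) ∈ Icc (-1 : ℝ) 1 := by
  constructor
  · rw [le_div_iff₀ (by linarith)]; linarith [hx.1]
  · rw [div_le_iff₀ (by linarith)]; linarith [hx.2]

lemma rescaled_mem_Ioo (hab : a < b) (hx : x ∈ Ioo a b) :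
    (2 * x - (a + b)) / (b - a) ∈ Ioo (-1 : ℝ) 1 := by
  constructor
  · rw [lt_div_iff₀ (by linarith)]; linarith [hx.1]
  · rw [div_lt_iff₀ (by linarith)]; linarith [hx.2]

lemma sqrt_one_sub_sq_div_add_rescaled (hab : a < b) (x : ℝ) :
    √(1 - ((2 * x - (a + b)) / (b - a)) ^ 2) /
        ((2 * x - (a + b)) / (b - a) + (a + b - 2 * p) / (b - a)) =
      √((x - a) * (b - x)) / (x - p) := by
  have hba : 0 < b - a := by linarith
  have h : 1 - ((2 * x - (a + b)) / (b - a)) ^ 2 = (2 / (b - a)) ^ 2 * ((x - a) * (b - x)) := by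
    field_simp; ring
  have h' : (2 * x - (a + b)) / (b - a) + (a + b - 2 * p) / (b - a) = 2 / (b - a) * (x - p) := by
    field_simp; ring
  rw [h, h', sqrt_mul (by positivity), sqrt_sq (by positivity)]
  exact mul_div_mul_left _ _ (by positivity)

lemma hasDerivAt_semicirclePrimitiveOn (hab : a < b) (hpa : p ≤ a) (hx : x ∈ Ioo a b) :
    HasDerivAt (semicirclePrimitiveOn a b p) (√((x - a) * (b - x)) / (x - p)) x := by
  have hba : 0 < b - a := by linarith
  have hlin : HasDerivAt (fun x => (2 * x - (a + b)) / (b - a)) (2 / (b - a)) x := by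
    simpa using (((hasDerivAt_id x).const_mul 2).sub_const (a + b)).div_const (b - a)
  refine (((hasDerivAt_semicirclePrimitive (one_le_rescaled_pole hab hpa)
    (rescaled_mem_Ioo hab hx)).comp x hlin).const_mul ((b - a) / 2)).congr_deriv ?_
  rw [sqrt_one_sub_sq_div_add_rescaled hab]
  field_simp

lemma continuousOn_semicirclePrimitiveOn (hab : a < b) (hpa : p ≤ a) :
    ContinuousOn (semicirclePrimitiveOn a b p) (Icc a b) :=
  continuousOn_const.mul <| (continuousOn_semicirclePrimitive (one_le_rescaled_pole hab hpa)).comp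
    (by fun_prop) fun _ hx => rescaled_mem_Icc hab hx

lemma semicirclePrimitiveOn_sub (hab : a < b) (hpa : p ≤ a) :
    semicirclePrimitiveOn a b p b - semicirclePrimitiveOn a b p a =
      π * ((a + b) / 2 - p - √((a - p) * (b - p))) := by
  have hba : 0 < b - a := by linarith
  have h1 : (2 * b - (a + b)) / (b - a) = 1 := by field_simp; ring
  have h2 : (2 * a - (a + b)) / (b - a) = -1 := by field_simp; ring
  have hc : ((a + b - 2 * p) / (b - a)) ^ 2 - 1 = (2 / (b - a)) ^ 2 * ((a - p) * (b - p)) := by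
    field_simp; ring
  simp only [semicirclePrimitiveOn, h1, h2, ← mul_sub,
    semicirclePrimitive_one_sub_neg_one (one_le_rescaled_pole hab hpa), hc]
  rw [sqrt_mul (by positivity), sqrt_sq (by positivity)]
  field_simp

theorem intervalIntegrable_sqrt_mul_div_sub (hab : a < b) (hpa : p ≤ a) :
    IntervalIntegrable (fun x => √((x - a) * (b - x)) / (x - p)) volume a b := by
  refine intervalIntegrable_deriv_of_nonneg (g := semicirclePrimitiveOn a b p) ?_ ?_ ?_
  · simpa [uIcc_of_le hab.le] using continuousOn_semicirclePrimitiveOn hab hpa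
  all_goals simp only [min_eq_left hab.le, max_eq_right hab.le]
  · exact fun x hx => hasDerivAt_semicirclePrimitiveOn hab hpa hx
  · exact fun x hx => div_nonneg (sqrt_nonneg _) (by linarith [hx.1])

theorem integral_sqrt_mul_div_sub (hab : a < b) (hpa : p ≤ a) :
    ∫ x in a..b, √((x - a) * (b - x)) / (x - p) =
      π * ((a + b) / 2 - p - √((a - p) * (b - p))) := by
  rw [integral_eq_sub_of_hasDerivAt_of_le hab.le (continuousOn_semicirclePrimitiveOn hab hpa)
    (fun x hx => hasDerivAt_semicirclePrimitiveOn hab hpa hx)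
    (intervalIntegrable_sqrt_mul_div_sub hab hpa), semicirclePrimitiveOn_sub hab hpa]

end SemicirclePrimitiveOn

theorem integral_sqrt_mul_div_mul_add_one {a b : ℝ} (ha : 0 ≤ a) (hab : a < b) :
    ∫ x in a..b, √((x - a) * (b - x)) / (x * (x + 1)) =
      π * (√((a + 1) * (b + 1)) - √(a * b) - 1) := by
  have hsplit : EqOn (fun x => √((x - a) * (b - x)) / (x * (x + 1)))
      (fun x => √((x - a) * (b - x)) / (x - 0) - √((x - a) * (b - x)) / (x - -1)) (uIcc a b) := by
    intro x hx
    rw [uIcc_of_le hab.le] at hx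
    rcases (ha.trans hx.1).eq_or_lt with rfl | hx0
    · simp [le_antisymm hx.1 ha]
    have : 0 < x + 1 := by linarith
    simp only [sub_zero, sub_neg_eq_add]
    field_simp
    ring
  rw [integral_congr hsplit, integral_sub (intervalIntegrable_sqrt_mul_div_sub hab ha)
    (intervalIntegrable_sqrt_mul_div_sub hab (by linarith)), integral_sqrt_mul_div_sub hab ha,
    integral_sqrt_mul_div_sub hab (by linarith)]
  simp only [sub_zero, sub_neg_eq_add]
  ring

lemma sub_mul_sub_nonneg_iff_mem_Icc {a b x : ℝ} (hab : a ≤ b) :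
    0 ≤ (x - a) * (b - x) ↔ x ∈ Icc a b := by
  refine ⟨fun h => ⟨?_, ?_⟩, fun hx => mul_nonneg (by linarith [hx.1]) (by linarith [hx.2])⟩
  · by_contra! hxa
    nlinarith
  · by_contra! hbx
    nlinarith

noncomputable def lowerEdge (lam β s : ℝ) : ℝ := (1 / (lam ^ 2 * β)) * ((1 + β) * lam + 2 - 2 * s)

noncomputable def upperEdge (lam β s : ℝ) : ℝ := (1 / (lam ^ 2 * β)) * ((1 + β) * lam + 2 + 2 * s)

section Edges

variable {lam β s : ℝ}

lemma quadratic_eq_sq_mul_edges (hlam : lam ≠ 0) (hβ : β ≠ 0)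
    (hs : s ^ 2 = lam ^ 2 * β + lam * (β + 1) + 1) (x : ℝ) :
    -(β - 1) ^ 2 + 2 * β * ((1 + β) * lam + 2) * x - β ^ 2 * lam ^ 2 * x ^ 2 =
      (β * lam) ^ 2 * ((x - lowerEdge lam β s) * (upperEdge lam β s - x)) := by
  simp only [lowerEdge, upperEdge]
  field_simp
  linear_combination (-4) * hs

lemma lowerEdge_nonneg (hlam : 0 < lam) (hβ : 0 < β)
    (hs : s ^ 2 = lam ^ 2 * β + lam * (β + 1) + 1) : 0 ≤ lowerEdge lam β s := by
  have : 2 * s ≤ (1 + β) * lam + 2 := by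
    nlinarith [sq_nonneg (lam * (β - 1)), mul_pos hlam hβ]
  exact mul_nonneg (by positivity) (by linarith)

lemma lowerEdge_lt_upperEdge (hlam : lam ≠ 0) (hβ : 0 < β) (hs0 : 0 < s) :
    lowerEdge lam β s < upperEdge lam β s := by
  unfold lowerEdge upperEdge
  gcongr
  linarith

lemma sqrt_lowerEdge_mul_upperEdge (hlam : 0 < lam) (hβ : 0 < β)
    (hs : s ^ 2 = lam ^ 2 * β + lam * (β + 1) + 1) :
    √(lowerEdge lam β s * upperEdge lam β s) = |β - 1| / (lam * β) := by
  have : lowerEdge lam β s * upperEdge lam β s = ((β - 1) / (lam * β)) ^ 2 := by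
    simp only [lowerEdge, upperEdge]
    field_simp
    linear_combination (-4) * hs
  rw [this, sqrt_sq_eq_abs, abs_div, abs_of_pos (mul_pos hlam hβ)]

lemma sqrt_lowerEdge_add_one_mul_upperEdge_add_one (hlam : 0 < lam) (hβ : 0 < β)
    (hs : s ^ 2 = lam ^ 2 * β + lam * (β + 1) + 1) :
    √((lowerEdge lam β s + 1) * (upperEdge lam β s + 1)) = 1 + (β + 1) / (lam * β) := by
  have : (lowerEdge lam β s + 1) * (upperEdge lam β s + 1) = (1 + (β + 1) / (lam * β)) ^ 2 := by
    simp only [lowerEdge, upperEdge]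
    field_simp
    linear_combination (-4) * hs
  exact this ▸ sqrt_sq (by positivity)

end Edges

theorem stmt12 (lam β : ℝ) (hlam : 0 < lam) (hβ : 0 < β) :
    let Q : ℝ → ℝ := fun x => -(β - 1) ^ 2 + 2 * β * ((1 + β) * lam + 2) * x -
      β ^ 2 * lam ^ 2 * x ^ 2
    let x₁ := (1 / (lam ^ 2 * β)) *
      ((1 + β) * lam + 2 - 2 * Real.sqrt (lam ^ 2 * β + lam * (β + 1) + 1))
    let x₂ := (1 / (lam ^ 2 * β)) *
      ((1 + β) * lam + 2 + 2 * Real.sqrt (lam ^ 2 * β + lam * (β + 1) + 1))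
    (∀ x : ℝ, 0 ≤ Q x ↔ x ∈ Set.Icc x₁ x₂) ∧
    (∫ x in Set.Icc x₁ x₂, (1 / (2 * Real.pi)) * Real.sqrt (Q x) / (x * (x + 1))) +
      max (1 - β) 0 = 1 := by
  intro Q x₁ x₂
  have hD : 0 < lam ^ 2 * β + lam * (β + 1) + 1 := by positivity
  have hs := sq_sqrt hD.le
  have hlt : x₁ < x₂ := lowerEdge_lt_upperEdge hlam.ne' hβ (sqrt_pos.2 hD)
  have hQ : ∀ x, Q x = (β * lam) ^ 2 * ((x - x₁) * (x₂ - x)) :=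
    quadratic_eq_sq_mul_edges hlam.ne' hβ.ne' hs
  refine ⟨fun x => ?_, ?_⟩
  · rw [hQ, mul_nonneg_iff_of_pos_left (by positivity), sub_mul_sub_nonneg_iff_mem_Icc hlt.le]
  have hdensity : ∀ x, 1 / (2 * π) * √(Q x) / (x * (x + 1)) =
      β * lam / (2 * π) * (√((x - x₁) * (x₂ - x)) / (x * (x + 1))) := fun x => by
    rw [hQ, sqrt_mul (sq_nonneg _), sqrt_sq (by positivity)]
    ring
  rw [integral_Icc_eq_integral_Ioc, ← integral_of_le hlt.le]
  simp_rw [hdensity, intervalIntegral.integral_const_mul]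
  have hx₁ : 0 ≤ x₁ := lowerEdge_nonneg hlam hβ hs
  have hprod : √(x₁ * x₂) = |β - 1| / (lam * β) := sqrt_lowerEdge_mul_upperEdge hlam hβ hs
  have hprod' : √((x₁ + 1) * (x₂ + 1)) = 1 + (β + 1) / (lam * β) :=
    sqrt_lowerEdge_add_one_mul_upperEdge_add_one hlam hβ hs
  rw [integral_sqrt_mul_div_mul_add_one hx₁ hlt, hprod, hprod']
  rcases le_total β 1 with hβ1 | hβ1
  · rw [abs_of_nonpos (by linarith), max_eq_left (by linarith)]
    field_simp
    ring
  · rw [abs_of_nonneg (by linarith), max_eq_right (by linarith)]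
    field_simp
    ring
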